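/- Let q₀ > 0 and define the Schrödinger cat-q₀ density matrix coefficients ρ_{j,k} = 2 (q₀/√2)^{j+k} / ( √(j! k!) (e^{q₀²/2} + e^{−q₀²/2}) ) when j and k are both even, and ρ_{j,k} = 0 otherwise. Then for every φ ∈ ℝ and x ∈ ℝ, the double series ∑_{j ≥ 0} ∑_{k ≥ 0} ρ_{j,k} ψ_j(x) ψ_k(x) e^{−i(k−j)φ} converges absolutely and equals ( exp(−(x − q₀ cos φ)²) + exp(−(x + q₀ cos φ)²) + 2 cos(2 q₀ x sin φ) exp(−x² − q₀² cos² φ) ) / ( 2√π (1 + exp(−q₀²)) ). -/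

import Mathlib

/-- The physicists' Hermite polynomial `H_k(x) = (−1)^k e^{x²} (d^k/dx^k) e^{−x²}`. -/
noncomputable def hermiteP (k : ℕ) (x : ℝ) : ℝ :=
  (-1 : ℝ) ^ k * Real.exp (x ^ 2) * iteratedDeriv k (fun y => Real.exp (-y ^ 2)) x

/-- The `k`-th Fock function `ψ_k(x) = (√π 2^k k!)^{−1/2} H_k(x) e^{−x²/2}`. -/
noncomputable def fock (k : ℕ) (x : ℝ) : ℝ :=
  (Real.sqrt (Real.sqrt Real.pi * 2 ^ k * Nat.factorial k))⁻¹ * hermiteP k x *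
    Real.exp (-x ^ 2 / 2)

/-- The density matrix coefficients of the Schrödinger cat-`q₀` state:
`ρ_{j,k} = 2 (q₀/√2)^{j+k} / (√(j! k!) (e^{q₀²/2} + e^{−q₀²/2}))` when `j` and `k` are both
even, and `0` otherwise. -/
noncomputable def catCoeff (q₀ : ℝ) (j k : ℕ) : ℝ :=
  if Even j ∧ Even k then
    2 * (q₀ / Real.sqrt 2) ^ (j + k) /
      (Real.sqrt ((Nat.factorial j : ℝ) * (Nat.factorial k : ℝ)) *
        (Real.exp (q₀ ^ 2 / 2) + Real.exp (-q₀ ^ 2 / 2)))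
  else 0

/-!
The coefficients factor as `ρ_{jk} = c_j c_k`, so the double series is `|∑ₖ cₖ ψₖ(x) e^{-ikφ}|²`,
a product of two series in `ℂ`, where convergence is absolute. With `α = (q₀/√2) e^{-iφ}`,
`cₖ e^{-ikφ}` is proportional to `(αᵏ + (-α)ᵏ)/√k!`, and the Hermite generating function
`∑ Hₙ(x) tⁿ/n! = e^{2xt - t²}` sums `∑ₖ αᵏ/√k! ψₖ(x)` to the Gaussian
`π^{-1/4} e^{-x²/2 + √2 αx - α²/2}`. The density is thus the squared modulus of a sum of two
Gaussians; its cross term produces the interference factor `cos(2 q₀ x sin φ)`.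
-/

open Polynomial

noncomputable def physHermite : ℕ → ℤ[X]
  | 0 => 1
  | n + 1 => 2 * X * physHermite n - derivative (physHermite n)

theorem iteratedDeriv_eq_physHermite_mul {𝕜 : Type*} [NontriviallyNormedField 𝕜] {E : 𝕜 → 𝕜}
    (hE : ∀ y, HasDerivAt E (-2 * y * E y) y) (n : ℕ) (x : 𝕜) :
    iteratedDeriv n E x = (-1) ^ n * aeval x (physHermite n) * E x := by
  induction n generalizing x with
  | zero => simp [physHermite]
  | succ n ih =>
    have h := (((physHermite n).hasDerivAt_aeval x).const_mul ((-1 : 𝕜) ^ n)).fun_mul (hE x)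
    rw [iteratedDeriv_succ, funext ih, h.deriv, physHermite]
    simp only [map_sub, map_mul, map_ofNat, aeval_X]
    ring

theorem hasDerivAt_exp_neg_sq (y : ℝ) :
    HasDerivAt (fun y => Real.exp (-y ^ 2)) (-2 * y * Real.exp (-y ^ 2)) y := by
  refine (hasDerivAt_pow 2 y).fun_neg.exp.congr_deriv ?_
  push_cast
  ring

theorem hasDerivAt_cexp_neg_sq (y : ℂ) :
    HasDerivAt (fun y => Complex.exp (-y ^ 2)) (-2 * y * Complex.exp (-y ^ 2)) y := by
  refine (hasDerivAt_pow 2 y).fun_neg.cexp.congr_deriv ?_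
  push_cast
  ring

theorem hermiteP_eq_aeval_physHermite (k : ℕ) (x : ℝ) :
    hermiteP k x = aeval x (physHermite k) := by
  have hsign : ((-1 : ℝ) ^ k) ^ 2 = 1 := by rw [← pow_mul, mul_comm, pow_mul]; simp
  have hexp : Real.exp (x ^ 2) * Real.exp (-x ^ 2) = 1 := by rw [← Real.exp_add]; simp
  rw [hermiteP, iteratedDeriv_eq_physHermite_mul hasDerivAt_exp_neg_sq]
  linear_combination (aeval x (physHermite k) * ((-1 : ℝ) ^ k) ^ 2) * hexp
    + aeval x (physHermite k) * hsign

theorem hasSum_physHermite (x t : ℂ) :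
    HasSum (fun n => t ^ n / n.factorial * aeval x (physHermite n))
      (Complex.exp (2 * x * t - t ^ 2)) := by
  have hTaylor := Complex.hasSum_taylorSeries_of_entire
    (fun z => (hasDerivAt_cexp_neg_sq z).differentiableAt) x (x - t)
  have hexp : Complex.exp (x ^ 2) * Complex.exp (-x ^ 2) = 1 := by rw [← Complex.exp_add]; simp
  have hsum := hTaylor.mul_left (Complex.exp (x ^ 2))
  rw [← Complex.exp_add, show x ^ 2 + -(x - t) ^ 2 = 2 * x * t - t ^ 2 by ring] at hsum
  refine hsum.congr_fun fun n => ?_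
  rw [iteratedDeriv_eq_physHermite_mul hasDerivAt_cexp_neg_sq, smul_eq_mul, smul_eq_mul,
    sub_sub_cancel_left, neg_pow]
  have hsign : ((-1 : ℂ) ^ n) ^ 2 = 1 := by rw [← pow_mul, mul_comm, pow_mul]; simp
  linear_combination
    (-(t ^ n / n.factorial * aeval x (physHermite n) * ((-1 : ℂ) ^ n) ^ 2)) * hexp
      - t ^ n / n.factorial * aeval x (physHermite n) * hsign

theorem ofReal_aeval_physHermite (k : ℕ) (x : ℝ) :
    ((aeval x (physHermite k) : ℝ) : ℂ) = aeval (x : ℂ) (physHermite k) :=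
  (aeval_algebraMap_apply ℂ x (physHermite k)).symm

theorem Real.sqrt_pow {a : ℝ} (ha : 0 ≤ a) (k : ℕ) : Real.sqrt (a ^ k) = Real.sqrt a ^ k := by
  rw [Real.sqrt_eq_iff_mul_self_eq (by positivity) (by positivity), ← mul_pow,
    Real.mul_self_sqrt ha]

theorem fock_eq_div (k : ℕ) (x : ℝ) :
    fock k x = aeval x (physHermite k) * Real.exp (-x ^ 2 / 2) /
      (Real.sqrt (Real.sqrt Real.pi) * Real.sqrt 2 ^ k * Real.sqrt k.factorial) := by
  rw [fock, Real.sqrt_mul (by positivity), Real.sqrt_mul (by positivity),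
    Real.sqrt_pow zero_le_two, hermiteP_eq_aeval_physHermite]
  ring

/-- Unnormalized: this is `∑ₖ αᵏ/√k! ψₖ(x) = e^{|α|²/2} ⟨x|α⟩`. -/
noncomputable def coherentWave (x : ℝ) (α : ℂ) : ℂ :=
  (Real.sqrt (Real.sqrt Real.pi) : ℂ)⁻¹ *
    Complex.exp (-(x : ℂ) ^ 2 / 2 + Real.sqrt 2 * α * x - α ^ 2 / 2)

theorem hasSum_fock_coherentWave (x : ℝ) (α : ℂ) :
    HasSum (fun k => α ^ k / (Real.sqrt k.factorial : ℂ) * (fock k x : ℂ))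
      (coherentWave x α) := by
  have hsqrt2 : (Real.sqrt 2 : ℂ) ^ 2 = 2 := by exact_mod_cast Real.sq_sqrt zero_le_two
  have hsum := (hasSum_physHermite x (α / Real.sqrt 2)).mul_left
    ((Real.sqrt (Real.sqrt Real.pi) : ℂ)⁻¹ * Complex.exp (-(x : ℂ) ^ 2 / 2))
  have hexponent : -(x : ℂ) ^ 2 / 2 + (2 * x * (α / Real.sqrt 2) - (α / Real.sqrt 2) ^ 2) =
      -(x : ℂ) ^ 2 / 2 + Real.sqrt 2 * α * x - α ^ 2 / 2 := by
    field_simp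
    linear_combination (α ^ 2 - 2 * x * Real.sqrt 2 * α) * hsqrt2
  rw [mul_assoc, ← Complex.exp_add, hexponent] at hsum
  refine hsum.congr_fun fun k => ?_
  rw [fock_eq_div]
  push_cast
  have hfact : (Real.sqrt k.factorial : ℂ) ^ 2 = k.factorial := by
    exact_mod_cast Real.sq_sqrt (Nat.cast_nonneg _)
  rw [← ofReal_aeval_physHermite]
  field_simp
  rw [hfact, div_pow]
  field_simp

theorem conj_coherentWave_mul_coherentWave (x : ℝ) (β γ : ℂ) :
    starRingEnd ℂ (coherentWave x β) * coherentWave x γ =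
      (Real.sqrt Real.pi : ℂ)⁻¹ * Complex.exp (-(x : ℂ) ^ 2 +
        Real.sqrt 2 * (starRingEnd ℂ β + γ) * x - (starRingEnd ℂ β ^ 2 + γ ^ 2) / 2) := by
  have hpi : (Real.sqrt (Real.sqrt Real.pi) : ℂ) ^ 2 = Real.sqrt Real.pi := by
    exact_mod_cast Real.sq_sqrt (Real.sqrt_nonneg _)
  simp only [coherentWave, map_mul, map_inv₀, Complex.conj_ofReal, ← Complex.exp_conj, map_add,
    map_sub, map_div₀, map_neg, map_pow, map_ofNat]
  rw [← hpi, mul_mul_mul_comm, ← Complex.exp_add, ← mul_inv, ← sq]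
  congr 2
  ring

noncomputable def catNorm (q₀ : ℝ) : ℝ := Real.exp (q₀ ^ 2 / 2) + Real.exp (-q₀ ^ 2 / 2)

theorem catNorm_pos (q₀ : ℝ) : 0 < catNorm q₀ := by
  unfold catNorm
  positivity

theorem catNorm_eq (q₀ : ℝ) :
    catNorm q₀ = Real.exp (q₀ ^ 2 / 2) * (1 + Real.exp (-q₀ ^ 2)) := by
  rw [catNorm, mul_add, mul_one, ← Real.exp_add]
  ring_nf

/-- `aᵏ + (-a)ᵏ` vanishes for odd `k`; this is how the parity condition of `catCoeff` enters. -/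
noncomputable def catAmp (q₀ : ℝ) (k : ℕ) : ℝ :=
  ((q₀ / Real.sqrt 2) ^ k + (-(q₀ / Real.sqrt 2)) ^ k) /
    (Real.sqrt (2 * catNorm q₀) * Real.sqrt k.factorial)

theorem catCoeff_eq_catAmp_mul_catAmp (q₀ : ℝ) (j k : ℕ) :
    catCoeff q₀ j k = catAmp q₀ j * catAmp q₀ k := by
  have hN := catNorm_pos q₀
  rw [catCoeff, catAmp, catAmp]
  split_ifs with h
  · obtain ⟨hj, hk⟩ := h
    rw [hj.neg_pow, hk.neg_pow, Real.sqrt_mul (Nat.cast_nonneg _), div_mul_div_comm,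
      mul_mul_mul_comm, Real.mul_self_sqrt (by positivity), ← catNorm, pow_add]
    field_simp
    ring
  · rcases not_and_or.mp h with hj | hk
    · rw [(Nat.not_even_iff_odd.mp hj).neg_pow]
      ring
    · rw [(Nat.not_even_iff_odd.mp hk).neg_pow]
      ring

noncomputable def catComponent (q₀ φ x : ℝ) (k : ℕ) : ℂ :=
  ((catAmp q₀ k * fock k x : ℝ) : ℂ) * Complex.exp (-Complex.I * k * φ)

noncomputable def catAlpha (q₀ φ : ℝ) : ℂ := (q₀ / Real.sqrt 2 : ℝ) * Complex.exp (-φ * Complex.I)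

noncomputable def catWave (q₀ φ x : ℝ) : ℂ :=
  (coherentWave x (catAlpha q₀ φ) + coherentWave x (-catAlpha q₀ φ)) /
    Real.sqrt (2 * catNorm q₀)

theorem hasSum_catComponent (q₀ φ x : ℝ) : HasSum (catComponent q₀ φ x) (catWave q₀ φ x) := by
  have hsum := ((hasSum_fock_coherentWave x (catAlpha q₀ φ)).add
    (hasSum_fock_coherentWave x (-catAlpha q₀ φ))).div_const (Real.sqrt (2 * catNorm q₀) : ℂ)
  refine hsum.congr_fun fun k => ?_
  have hpow : ∀ a : ℝ, ((a * Complex.exp (-φ * Complex.I)) ^ k : ℂ) =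
      a ^ k * Complex.exp (-Complex.I * k * φ) := by
    intro a
    rw [mul_pow, ← Complex.exp_nat_mul]
    ring_nf
  have hneg : -catAlpha q₀ φ = ((-(q₀ / Real.sqrt 2) : ℝ) : ℂ) * Complex.exp (-φ * Complex.I) := by
    rw [catAlpha]
    push_cast
    ring
  rw [catComponent, catAmp, hneg, catAlpha, hpow, hpow]
  push_cast
  ring

theorem catCoeff_mul_fock_mul_exp_eq (q₀ φ x : ℝ) (j k : ℕ) :
    ((catCoeff q₀ j k * fock j x * fock k x : ℝ) : ℂ) *
        Complex.exp (-Complex.I * (((k : ℝ) - (j : ℝ) : ℝ) : ℂ) * φ) =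
      starRingEnd ℂ (catComponent q₀ φ x j) * catComponent q₀ φ x k := by
  simp only [catComponent, map_mul, Complex.conj_ofReal, ← Complex.exp_conj, map_neg,
    Complex.conj_I, map_natCast]
  rw [catCoeff_eq_catAmp_mul_catAmp, mul_mul_mul_comm, ← Complex.exp_add]
  push_cast
  ring_nf

theorem catAlpha_eq (q₀ φ : ℝ) :
    catAlpha q₀ φ = (q₀ / Real.sqrt 2 : ℝ) * (Complex.cos φ - Complex.sin φ * Complex.I) := by
  rw [catAlpha, Complex.exp_mul_I, Complex.cos_neg, Complex.sin_neg, neg_mul, ← sub_eq_add_neg]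

theorem conj_catAlpha_eq (q₀ φ : ℝ) :
    starRingEnd ℂ (catAlpha q₀ φ) =
      (q₀ / Real.sqrt 2 : ℝ) * (Complex.cos φ + Complex.sin φ * Complex.I) := by
  rw [catAlpha_eq]
  simp only [map_mul, map_sub, Complex.conj_ofReal, ← Complex.cos_conj, ← Complex.sin_conj,
    Complex.conj_I]
  ring

theorem sqrt_two_mul_conj_catAlpha_add (q₀ φ : ℝ) :
    Real.sqrt 2 * (starRingEnd ℂ (catAlpha q₀ φ) + catAlpha q₀ φ) = 2 * q₀ * Complex.cos φ := by
  rw [conj_catAlpha_eq, catAlpha_eq]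
  push_cast
  field_simp
  ring

theorem sqrt_two_mul_conj_catAlpha_sub (q₀ φ : ℝ) :
    Real.sqrt 2 * (starRingEnd ℂ (catAlpha q₀ φ) - catAlpha q₀ φ) =
      2 * q₀ * Complex.sin φ * Complex.I := by
  rw [conj_catAlpha_eq, catAlpha_eq]
  push_cast
  field_simp
  ring

theorem conj_catAlpha_sq_add_sq (q₀ φ : ℝ) :
    starRingEnd ℂ (catAlpha q₀ φ) ^ 2 + catAlpha q₀ φ ^ 2 =
      q₀ ^ 2 * (2 * Complex.cos φ ^ 2 - 1) := by
  have ha : ((q₀ / Real.sqrt 2 : ℝ) : ℂ) ^ 2 = q₀ ^ 2 / 2 := by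
    rw [← Complex.ofReal_pow, div_pow, Real.sq_sqrt zero_le_two]
    push_cast
    ring
  rw [conj_catAlpha_eq, catAlpha_eq]
  linear_combination (2 * Complex.cos φ ^ 2 + 2 * Complex.sin φ ^ 2 * Complex.I ^ 2) * ha
    + q₀ ^ 2 * Complex.sin φ ^ 2 * Complex.I_sq - q₀ ^ 2 * Complex.cos_sq_add_sin_sq (φ : ℂ)

theorem conj_catWave_mul_catWave (q₀ φ x : ℝ) :
    starRingEnd ℂ (catWave q₀ φ x) * catWave q₀ φ x =
      (((Real.exp (-(x - q₀ * Real.cos φ) ^ 2) + Real.exp (-(x + q₀ * Real.cos φ) ^ 2) +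
            2 * Real.cos (2 * q₀ * x * Real.sin φ) *
              Real.exp (-x ^ 2 - q₀ ^ 2 * Real.cos φ ^ 2)) /
          (2 * Real.sqrt Real.pi * (1 + Real.exp (-q₀ ^ 2))) : ℝ) : ℂ) := by
  set α := catAlpha q₀ φ
  have hre := sqrt_two_mul_conj_catAlpha_add q₀ φ
  have him := sqrt_two_mul_conj_catAlpha_sub q₀ φ
  have hsq := conj_catAlpha_sq_add_sq q₀ φ
  have hnorm : (Real.sqrt (2 * catNorm q₀) : ℂ) ^ 2 = 2 * catNorm q₀ := by
    exact_mod_cast Real.sq_sqrt (by linarith [catNorm_pos q₀])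
  have hexpand : starRingEnd ℂ (catWave q₀ φ x) * catWave q₀ φ x =
      (starRingEnd ℂ (coherentWave x α) * coherentWave x α +
        starRingEnd ℂ (coherentWave x (-α)) * coherentWave x (-α) +
        (starRingEnd ℂ (coherentWave x α) * coherentWave x (-α) +
          starRingEnd ℂ (coherentWave x (-α)) * coherentWave x α)) / (2 * catNorm q₀) := by
    simp only [catWave, map_div₀, map_add, Complex.conj_ofReal]
    rw [← hnorm]
    ring
  have h₁ : -(x : ℂ) ^ 2 + Real.sqrt 2 * (starRingEnd ℂ α + α) * x -
      (starRingEnd ℂ α ^ 2 + α ^ 2) / 2 = -(x - q₀ * Complex.cos φ) ^ 2 + q₀ ^ 2 / 2 := by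
    linear_combination x * hre - hsq / 2
  have h₂ : -(x : ℂ) ^ 2 + Real.sqrt 2 * (-starRingEnd ℂ α + -α) * x -
      ((-starRingEnd ℂ α) ^ 2 + (-α) ^ 2) / 2 = -(x + q₀ * Complex.cos φ) ^ 2 + q₀ ^ 2 / 2 := by
    linear_combination -x * hre - hsq / 2
  have h₃ : -(x : ℂ) ^ 2 + Real.sqrt 2 * (starRingEnd ℂ α + -α) * x -
      (starRingEnd ℂ α ^ 2 + (-α) ^ 2) / 2 = -(x : ℂ) ^ 2 - q₀ ^ 2 * Complex.cos φ ^ 2 +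
        q₀ ^ 2 / 2 + (2 * q₀ * x * Complex.sin φ) * Complex.I := by
    linear_combination x * him - hsq / 2
  have h₄ : -(x : ℂ) ^ 2 + Real.sqrt 2 * (-starRingEnd ℂ α + α) * x -
      ((-starRingEnd ℂ α) ^ 2 + α ^ 2) / 2 = -(x : ℂ) ^ 2 - q₀ ^ 2 * Complex.cos φ ^ 2 +
        q₀ ^ 2 / 2 + -(2 * q₀ * x * Complex.sin φ) * Complex.I := by
    linear_combination -x * him - hsq / 2
  simp only [hexpand, conj_coherentWave_mul_coherentWave, map_neg]
  rw [h₁, h₂, h₃, h₄, catNorm_eq]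
  push_cast
  rw [Complex.two_cos]
  simp only [Complex.exp_add]
  field_simp

theorem cat_density_general (q₀ : ℝ) (φ x : ℝ) :
    Summable (fun p : ℕ × ℕ =>
      ‖((catCoeff q₀ p.1 p.2 * fock p.1 x * fock p.2 x : ℝ) : ℂ) *
        Complex.exp (-Complex.I * (((p.2 : ℝ) - (p.1 : ℝ) : ℝ) : ℂ) * (φ : ℂ))‖) ∧
    ∑' p : ℕ × ℕ,
      ((catCoeff q₀ p.1 p.2 * fock p.1 x * fock p.2 x : ℝ) : ℂ) *
        Complex.exp (-Complex.I * (((p.2 : ℝ) - (p.1 : ℝ) : ℝ) : ℂ) * (φ : ℂ))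
      = (((Real.exp (-(x - q₀ * Real.cos φ) ^ 2) + Real.exp (-(x + q₀ * Real.cos φ) ^ 2) +
            2 * Real.cos (2 * q₀ * x * Real.sin φ) *
              Real.exp (-x ^ 2 - q₀ ^ 2 * Real.cos φ ^ 2)) /
          (2 * Real.sqrt Real.pi * (1 + Real.exp (-q₀ ^ 2))) : ℝ) : ℂ) := by
  have hsum := hasSum_catComponent q₀ φ x
  have hconj : HasSum (fun k => starRingEnd ℂ (catComponent q₀ φ x k))
      (starRingEnd ℂ (catWave q₀ φ x)) := Complex.hasSum_conj'.mpr hsum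
  have hnorm := summable_norm_iff.mpr hsum.summable
  have hnorm_conj := summable_norm_iff.mpr hconj.summable
  simp only [catCoeff_mul_fock_mul_exp_eq]
  refine ⟨hnorm_conj.mul_norm hnorm, ?_⟩
  rw [← tsum_mul_tsum_of_summable_norm hnorm_conj hnorm, hconj.tsum_eq, hsum.tsum_eq,
    conj_catWave_mul_catWave]

/-- For the Schrödinger cat-`q₀` state, the double series
`∑_{j,k} ρ_{j,k} ψ_j(x) ψ_k(x) e^{−i(k−j)φ}` converges absolutely and equals the density
`(exp(−(x − q₀cos φ)²) + exp(−(x + q₀cos φ)²) + 2cos(2q₀x sin φ)exp(−x² − q₀²cos²φ)) /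
(2√π(1 + exp(−q₀²)))`. -/
theorem cat_density (q₀ : ℝ) (hq₀ : 0 < q₀) (φ x : ℝ) :
    Summable (fun p : ℕ × ℕ =>
      ‖((catCoeff q₀ p.1 p.2 * fock p.1 x * fock p.2 x : ℝ) : ℂ) *
        Complex.exp (-Complex.I * (((p.2 : ℝ) - (p.1 : ℝ) : ℝ) : ℂ) * (φ : ℂ))‖) ∧
    ∑' p : ℕ × ℕ,
      ((catCoeff q₀ p.1 p.2 * fock p.1 x * fock p.2 x : ℝ) : ℂ) *
        Complex.exp (-Complex.I * (((p.2 : ℝ) - (p.1 : ℝ) : ℝ) : ℂ) * (φ : ℂ))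
      = (((Real.exp (-(x - q₀ * Real.cos φ) ^ 2) + Real.exp (-(x + q₀ * Real.cos φ) ^ 2) +
            2 * Real.cos (2 * q₀ * x * Real.sin φ) *
              Real.exp (-x ^ 2 - q₀ ^ 2 * Real.cos φ ^ 2)) /
          (2 * Real.sqrt Real.pi * (1 + Real.exp (-q₀ ^ 2))) : ℝ) : ℂ) :=
  cat_density_general q₀ φ x
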